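/- arXiv:2403.19041 — 9 statements merged into one kernel-verified Lean document; each statement's English description precedes it below -/
import Mathlib

section
/- Let S be a semibounded linear relation in a Hilbert space H with lower bound γ, let c ≤ γ, let Q_c : dom S → K be a linear operator into a Hilbert space K with ⟨φ' - cφ, ψ⟩ = ⟨Q_c φ, Q_c ψ⟩ for all (φ,φ'),(ψ,ψ') ∈ S, and let J_c = {(Q_c φ, φ' - cφ) : (φ,φ') ∈ S} ⊆ K × H. Then the multivalued part of J_c satisfies mul J_c = ran(S - c) ∩ mul S*, where mul S* = (dom S)^⊥ ∩ {φ' : (0,φ') ∈ S*}. -/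
open scoped InnerProductSpace
open Filter Topology

noncomputable section

variable {E F F' : Type*}
  [NormedAddCommGroup E] [InnerProductSpace ℂ E] [CompleteSpace E]
  [NormedAddCommGroup F] [InnerProductSpace ℂ F] [CompleteSpace F]
  [NormedAddCommGroup F'] [InnerProductSpace ℂ F'] [CompleteSpace F']

/-- The domain of a linear relation from `E` to `F`. -/
def dom (T : Set (E × F)) : Set E := Prod.fst '' T

/-- The range of a linear relation from `E` to `F`. -/
def ran (T : Set (E × F)) : Set F := Prod.snd '' T

/-- The multivalued part of a linear relation. -/
def mulp (T : Set (E × F)) : Set F := {y | ((0 : E), y) ∈ T}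

/-- The kernel of a linear relation. -/
def kerr (T : Set (E × F)) : Set E := {x | (x, (0 : F)) ∈ T}

/-- The adjoint relation: `T* = {(h,k) : ⟪h, f'⟫ = ⟪k, f⟫ for all (f,f') ∈ T}`. -/
def adj (T : Set (E × F)) : Set (F × E) :=
  {q | ∀ p ∈ T, ⟪q.2, p.1⟫_ℂ = ⟪q.1, p.2⟫_ℂ}

/-- The graph of the linear operator `Q` restricted to the domain `D`. -/
def graphOn (Q : E →ₗ[ℂ] F) (D : Set E) : Set (E × F) :=
  {p | p.1 ∈ D ∧ p.2 = Q p.1}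

/-- The companion relation `J_c = {(Q_c φ, φ' - cφ) : (φ,φ') ∈ S}` of a representing
map `Q` for the form `t(S) - c`. -/
def companion (S : Submodule ℂ (E × E)) (c : ℝ) (Q : E →ₗ[ℂ] F) : Set (F × E) :=
  {r | ∃ p ∈ S, r = (Q p.1, p.2 - (c : ℂ) • p.1)}

/-- For a semibounded relation `S` with lower bound `γ`, `c ≤ γ`, representing map
`Q_c` and companion relation `J_c`, one has `mul J_c = ran (S - c) ∩ mul S*`. -/
theorem mulp_companion_eq (S : Submodule ℂ (E × E)) (γ c : ℝ) (hc : c ≤ γ)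
    (hsym : ∀ p ∈ S, ∀ q ∈ S, ⟪p.2, q.1⟫_ℂ = ⟪p.1, q.2⟫_ℂ)
    (hsb : ∀ p ∈ S, γ * ‖p.1‖ ^ 2 ≤ (⟪p.2, p.1⟫_ℂ).re)
    (Q : E →ₗ[ℂ] F)
    (hrep : ∀ p ∈ S, ∀ q ∈ S,
      ⟪p.2 - (c : ℂ) • p.1, q.1⟫_ℂ = ⟪Q p.1, Q q.1⟫_ℂ) :
    mulp (companion S c Q) =
      {y : E | ∃ p ∈ S, y = p.2 - (c : ℂ) • p.1} ∩
        ({y : E | ∀ x ∈ dom (S : Set (E × E)), ⟪y, x⟫_ℂ = 0} ∩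
          mulp (adj (S : Set (E × E)))) := by
  ext y
  constructor
  · rintro ⟨p, hp, hy⟩
    rw [Prod.mk.injEq] at hy
    obtain ⟨hQ, hy⟩ := hy
    have hperp : ∀ x ∈ dom (S : Set (E × E)), ⟪y, x⟫_ℂ = 0 := by
      rintro x ⟨q, hq, rfl⟩
      rw [hy, hrep p hp q hq, ← hQ, inner_zero_left]
    refine ⟨⟨p, hp, hy⟩, hperp, ?_⟩
    intro q hq
    simp only [inner_zero_left]
    exact hperp q.1 ⟨q, hq, rfl⟩
  · rintro ⟨⟨p, hp, hy⟩, hperp, _⟩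
    have hQ : Q p.1 = 0 := by
      rw [← inner_self_eq_zero (𝕜 := ℂ), ← hrep p hp p hp, ← hy]
      exact hperp p.1 ⟨p, hp, rfl⟩
    exact ⟨p, hp, by rw [Prod.mk.injEq]; exact ⟨hQ.symm, hy⟩⟩
end
end

section
/- Let S be a semibounded linear relation in H with lower bound γ and c ≤ γ, with representing map Q_c and companion relation J_c. The inclusion S ⊆ c + J_c Q_c is an equality if and only if ran(S - c) ∩ mul S* = mul S. -/
open scoped InnerProductSpace
open Filter Topology

noncomputable section

variable {E F F' : Type*}
  [NormedAddCommGroup E] [InnerProductSpace ℂ E] [CompleteSpace E]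
  [NormedAddCommGroup F] [InnerProductSpace ℂ F] [CompleteSpace F]
  [NormedAddCommGroup F'] [InnerProductSpace ℂ F'] [CompleteSpace F']

/-- The inclusion `S ⊆ c + J_c Q_c` is an equality if and only if
`ran (S - c) ∩ mul S* = mul S`. -/
theorem eq_shift_companion_comp_iff (S : Submodule ℂ (E × E)) (γ c : ℝ) (hc : c ≤ γ)
    (hsym : ∀ p ∈ S, ∀ q ∈ S, ⟪p.2, q.1⟫_ℂ = ⟪p.1, q.2⟫_ℂ)
    (hsb : ∀ p ∈ S, γ * ‖p.1‖ ^ 2 ≤ (⟪p.2, p.1⟫_ℂ).re)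
    (Q : E →ₗ[ℂ] F)
    (hrep : ∀ p ∈ S, ∀ q ∈ S,
      ⟪p.2 - (c : ℂ) • p.1, q.1⟫_ℂ = ⟪Q p.1, Q q.1⟫_ℂ) :
    (S : Set (E × E)) =
        {q : E × E | q.1 ∈ dom (S : Set (E × E)) ∧
          ∃ η, (Q q.1, η) ∈ companion S c Q ∧ q.2 = (c : ℂ) • q.1 + η} ↔
      {y : E | ∃ p ∈ S, y = p.2 - (c : ℂ) • p.1} ∩ mulp (adj (S : Set (E × E)))
        = mulp (S : Set (E × E)) := by
  constructor
  · intro hST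
    ext y
    constructor
    · rintro ⟨⟨p, hp, hpy⟩, hy⟩
      have hyp : ⟪y, p.1⟫_ℂ = 0 := by
        have := hy p hp
        simpa using this
      have hQ0 : Q p.1 = 0 := by
        have h1 := hrep p hp p hp
        rw [← hpy, hyp] at h1
        exact inner_self_eq_zero.mp h1.symm
      have hmem : ((0 : E), y) ∈
          {q : E × E | q.1 ∈ dom (S : Set (E × E)) ∧
            ∃ η, (Q q.1, η) ∈ companion S c Q ∧ q.2 = (c : ℂ) • q.1 + η} := by
        refine ⟨⟨0, S.zero_mem, rfl⟩, y, ⟨p, hp, ?_⟩, by simp⟩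
        simp only [Prod.mk.injEq]
        exact ⟨by rw [map_zero, hQ0], hpy⟩
      rw [hST]
      exact hmem
    · intro hy
      refine ⟨⟨(0, y), hy, by simp⟩, ?_⟩
      intro r hr
      have := hrep (0, y) hy r hr
      simp only [map_zero, inner_zero_left] at this ⊢
      simpa using this
  · intro hA
    ext q
    constructor
    · intro hq
      exact ⟨⟨q, hq, rfl⟩, q.2 - (c : ℂ) • q.1, ⟨q, hq, rfl⟩, by abel⟩
    · rintro ⟨⟨s, hs, hs1⟩, η, ⟨p, hp, heq⟩, hq2⟩
      obtain ⟨hQeq, hηeq⟩ := Prod.mk.injEq .. ▸ heq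
      set y := (p.2 - (c : ℂ) • p.1) - (s.2 - (c : ℂ) • s.1) with hydef
      have hymem : y ∈ mulp (S : Set (E × E)) := by
        rw [← hA]
        refine ⟨⟨p - s, S.sub_mem hp hs, by simp [hydef]; module⟩, ?_⟩
        intro r hr
        have h1 := hrep p hp r hr
        have h2 := hrep s hs r hr
        have hQps : Q p.1 = Q s.1 := by rw [← hQeq, hs1]
        simp only [inner_zero_left]
        rw [hydef, inner_sub_left, h1, h2, hQps, sub_self]
      have : s + ((0 : E), y) ∈ S := S.add_mem hs hymem
      have hqeq : q = s + ((0 : E), y) := by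
        refine Prod.ext ?_ ?_
        · simp [hs1]
        · simp only [Prod.snd_add]
          rw [hq2, hηeq, hydef, hs1]
          abel
      rw [hqeq]
      exact this
end
end

section
/- Let S be a semibounded linear relation in H with lower bound γ, c ≤ γ, and Q_c a representing map for t(S) - c with companion relation J_c. An element ψ' ∈ H belongs to dom J_c* if and only if there exists a constant C < ∞ such that |⟨φ', ψ'⟩|² ≤ C · ⟨φ', φ⟩ for all (φ, φ') ∈ S - c. -/
open scoped InnerProductSpace
open Filter Topology

noncomputable section

variable {E F F' : Type*}
  [NormedAddCommGroup E] [InnerProductSpace ℂ E] [CompleteSpace E]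
  [NormedAddCommGroup F] [InnerProductSpace ℂ F] [CompleteSpace F]
  [NormedAddCommGroup F'] [InnerProductSpace ℂ F'] [CompleteSpace F']

/-! If `⟪ψ', φ' - cφ⟫` is bounded by a multiple of `‖Q_c φ‖`, it is a bounded functional
of `Q_c φ` on `ran Q_c`; Hahn–Banach extends it to `F` and Riesz writes it as `⟪k, Q_c φ⟫`,
i.e. `(ψ', k) ∈ J_c*`. Conversely Cauchy–Schwarz gives such a bound with constant `‖k‖`.
The stated criterion is the square of this bound, as `‖Q_c φ‖² = ⟪φ' - cφ, φ⟫`. -/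

theorem LinearMap.exists_comp_rangeRestrict_eq_of_ker_le {R M N P : Type*} [Ring R]
    [AddCommGroup M] [Module R M] [AddCommGroup N] [Module R N] [AddCommGroup P] [Module R P]
    (f : M →ₗ[R] N) (g : M →ₗ[R] P) (h : LinearMap.ker f ≤ LinearMap.ker g) :
    ∃ L : LinearMap.range f →ₗ[R] P, ∀ x, L (f.rangeRestrict x) = g x :=
  ⟨(LinearMap.ker f).liftQ g h ∘ₗ f.quotKerEquivRange.symm.toLinearMap, fun x => by
    have hx : f.quotKerEquivRange.symm (f.rangeRestrict x) = Submodule.Quotient.mk x :=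
      f.quotKerEquivRange.symm_apply_eq.2 (Subtype.ext (f.quotKerEquivRange_apply_mk x).symm)
    simp [hx]⟩

theorem LinearMap.exists_strongDual_comp_eq_of_norm_le {𝕜 M G : Type*} [RCLike 𝕜]
    [AddCommGroup M] [Module 𝕜 M] [NormedAddCommGroup G] [NormedSpace 𝕜 G]
    (f : M →ₗ[𝕜] G) (g : M →ₗ[𝕜] 𝕜) (C : ℝ) (hC : ∀ x, ‖g x‖ ≤ C * ‖f x‖) :
    ∃ Λ : StrongDual 𝕜 G, ∀ x, Λ (f x) = g x := by
  have hker : LinearMap.ker f ≤ LinearMap.ker g := fun x hx => by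
    simpa [LinearMap.mem_ker.mp hx] using hC x
  obtain ⟨L, hL⟩ := f.exists_comp_rangeRestrict_eq_of_ker_le g hker
  have hLC : ∀ y, ‖L y‖ ≤ C * ‖(y : G)‖ := by
    rintro ⟨-, x, rfl⟩
    exact (congrArg norm (hL x)).trans_le (hC x)
  obtain ⟨Λ, hΛ, -⟩ := exists_extension_norm_eq _ (L.mkContinuous C hLC)
  exact ⟨Λ, fun x => (hΛ (f.rangeRestrict x)).trans (hL x)⟩

theorem exists_inner_comp_eq_of_norm_le {𝕜 M H : Type*} [RCLike 𝕜]
    [AddCommGroup M] [Module 𝕜 M] [NormedAddCommGroup H] [InnerProductSpace 𝕜 H]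
    [CompleteSpace H] (f : M →ₗ[𝕜] H) (g : M →ₗ[𝕜] 𝕜) (C : ℝ)
    (hC : ∀ x, ‖g x‖ ≤ C * ‖f x‖) :
    ∃ k : H, ∀ x, ⟪k, f x⟫_𝕜 = g x := by
  obtain ⟨Λ, hΛ⟩ := f.exists_strongDual_comp_eq_of_norm_le g C hC
  exact ⟨(InnerProductSpace.toDual 𝕜 H).symm Λ, fun x =>
    InnerProductSpace.toDual_symm_apply.trans (hΛ x)⟩

theorem exists_forall_le_mul_iff_sq {ι : Type*} (s : Set ι) (a b : ι → ℝ)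
    (ha : ∀ i, 0 ≤ a i) (hb : ∀ i, 0 ≤ b i) :
    (∃ C : ℝ, ∀ i ∈ s, a i ≤ C * b i) ↔ ∃ C : ℝ, ∀ i ∈ s, a i ^ 2 ≤ C * b i ^ 2 := by
  constructor
  · rintro ⟨C, hC⟩
    refine ⟨C ^ 2, fun i hi => ?_⟩
    rw [← mul_pow]
    exact pow_le_pow_left₀ (ha i) (hC i hi) 2
  · rintro ⟨C, hC⟩
    refine ⟨√(max C 0), fun i hi => ?_⟩
    refine le_of_sq_le_sq ?_ (mul_nonneg (Real.sqrt_nonneg _) (hb i))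
    rw [mul_pow, Real.sq_sqrt (le_max_right _ _)]
    exact (hC i hi).trans (mul_le_mul_of_nonneg_right (le_max_left _ _) (sq_nonneg _))

section

variable {H K : Type*} [NormedAddCommGroup H] [InnerProductSpace ℂ H]
  [NormedAddCommGroup K] [InnerProductSpace ℂ K]

theorem mem_dom_adj_iff [CompleteSpace K] (T : Submodule ℂ (K × H)) (ψ : H) :
    ψ ∈ dom (adj (T : Set (K × H))) ↔ ∃ C : ℝ, ∀ p ∈ T, ‖⟪ψ, p.2⟫_ℂ‖ ≤ C * ‖p.1‖ := by
  constructor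
  · rintro ⟨⟨ψ, k⟩, hk, rfl⟩
    refine ⟨‖k‖, fun p hp => ?_⟩
    rw [← hk p hp]
    exact norm_inner_le_norm k p.1
  · rintro ⟨C, hC⟩
    obtain ⟨k, hk⟩ := exists_inner_comp_eq_of_norm_le (LinearMap.fst ℂ K H ∘ₗ T.subtype)
      (innerₛₗ ℂ ψ ∘ₗ LinearMap.snd ℂ K H ∘ₗ T.subtype) C (fun p => hC p p.2)
    exact ⟨(ψ, k), fun p hp => hk ⟨p, hp⟩, rfl⟩

def companionMap (c : ℝ) (Q : H →ₗ[ℂ] K) : H × H →ₗ[ℂ] K × H :=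
  (Q ∘ₗ LinearMap.fst ℂ H H).prod (LinearMap.snd ℂ H H - (c : ℂ) • LinearMap.fst ℂ H H)

theorem companion_eq_map (S : Submodule ℂ (H × H)) (c : ℝ) (Q : H →ₗ[ℂ] K) :
    companion S c Q = S.map (companionMap c Q) := by
  ext r
  simp [companion, companionMap, eq_comm]

end

theorem mem_dom_adj_companion_iff_general (S : Submodule ℂ (E × E)) (c : ℝ)
    (Q : E →ₗ[ℂ] F)
    (hrep : ∀ p ∈ S, ∀ q ∈ S,
      ⟪p.2 - (c : ℂ) • p.1, q.1⟫_ℂ = ⟪Q p.1, Q q.1⟫_ℂ)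
    (ψ' : E) :
    ψ' ∈ dom (adj (companion S c Q)) ↔
      ∃ C : ℝ, ∀ p ∈ S,
        ‖⟪p.2 - (c : ℂ) • p.1, ψ'⟫_ℂ‖ ^ 2 ≤
          C * (⟪p.2 - (c : ℂ) • p.1, p.1⟫_ℂ).re := by
  have hQ : ∀ p ∈ S, (⟪p.2 - (c : ℂ) • p.1, p.1⟫_ℂ).re = ‖Q p.1‖ ^ 2 := fun p hp => by
    rw [hrep p hp p hp, inner_self_eq_norm_sq_to_K]
    norm_cast
  rw [companion_eq_map, mem_dom_adj_iff]
  simp only [Submodule.mem_map, forall_exists_index, and_imp, forall_apply_eq_imp_iff₂]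
  refine (exists_forall_le_mul_iff_sq (S : Set (E × E)) (fun p => ‖⟪ψ', p.2 - (c : ℂ) • p.1⟫_ℂ‖)
    (fun p => ‖Q p.1‖) (fun _ => norm_nonneg _) (fun _ => norm_nonneg _)).trans ?_
  refine exists_congr fun C => forall₂_congr fun p hp => ?_
  rw [norm_inner_symm, hQ p hp]

/-- An element `ψ'` belongs to `dom J_c*` if and only if there is a constant `C` with
`|⟪φ', ψ'⟫|² ≤ C ⟪φ', φ⟫` for all `(φ,φ') ∈ S - c`. -/
theorem mem_dom_adj_companion_iff (S : Submodule ℂ (E × E)) (γ c : ℝ) (hc : c ≤ γ)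
    (hsym : ∀ p ∈ S, ∀ q ∈ S, ⟪p.2, q.1⟫_ℂ = ⟪p.1, q.2⟫_ℂ)
    (hsb : ∀ p ∈ S, γ * ‖p.1‖ ^ 2 ≤ (⟪p.2, p.1⟫_ℂ).re)
    (Q : E →ₗ[ℂ] F)
    (hrep : ∀ p ∈ S, ∀ q ∈ S,
      ⟪p.2 - (c : ℂ) • p.1, q.1⟫_ℂ = ⟪Q p.1, Q q.1⟫_ℂ)
    (ψ' : E) :
    ψ' ∈ dom (adj (companion S c Q)) ↔
      ∃ C : ℝ, ∀ p ∈ S,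
        ‖⟪p.2 - (c : ℂ) • p.1, ψ'⟫_ℂ‖ ^ 2 ≤
          C * (⟪p.2 - (c : ℂ) • p.1, p.1⟫_ℂ).re :=
  mem_dom_adj_companion_iff_general S c Q hrep ψ'
end
end

section
/- Let S be a semibounded linear relation in H with lower bound γ, c ≤ γ, representing map Q_c and companion relation J_c. An element ψ' ∈ mul(J_c**) if and only if there exists a sequence (φ_n, φ_n') ∈ S such that φ_n' - cφ_n → ψ' and ⟨φ_n' - cφ_n, φ_n⟩ → 0. -/
open scoped InnerProductSpace
open Filter Topology

noncomputable section

variable {E F F' : Type*}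
  [NormedAddCommGroup E] [InnerProductSpace ℂ E] [CompleteSpace E]
  [NormedAddCommGroup F] [InnerProductSpace ℂ F] [CompleteSpace F]
  [NormedAddCommGroup F'] [InnerProductSpace ℂ F'] [CompleteSpace F']

/-- An element `ψ'` belongs to `mul J_c**` if and only if there is a sequence
`(φ_n, φ_n') ∈ S` such that `φ_n' - cφ_n → ψ'` and `⟪φ_n' - cφ_n, φ_n⟫ → 0`. -/
theorem mem_mulp_closure_companion_iff (S : Submodule ℂ (E × E)) (γ c : ℝ)
    (hc : c ≤ γ)
    (hsym : ∀ p ∈ S, ∀ q ∈ S, ⟪p.2, q.1⟫_ℂ = ⟪p.1, q.2⟫_ℂ)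
    (hsb : ∀ p ∈ S, γ * ‖p.1‖ ^ 2 ≤ (⟪p.2, p.1⟫_ℂ).re)
    (Q : E →ₗ[ℂ] F)
    (hrep : ∀ p ∈ S, ∀ q ∈ S,
      ⟪p.2 - (c : ℂ) • p.1, q.1⟫_ℂ = ⟪Q p.1, Q q.1⟫_ℂ)
    (ψ' : E) :
    ψ' ∈ mulp (closure (companion S c Q)) ↔
      ∃ u : ℕ → E × E, (∀ n, u n ∈ S) ∧
        Tendsto (fun n => (u n).2 - (c : ℂ) • (u n).1) atTop (𝓝 ψ') ∧
        Tendsto (fun n => ⟪(u n).2 - (c : ℂ) • (u n).1, (u n).1⟫_ℂ)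
          atTop (𝓝 0) := by
  constructor
  · intro h
    rw [mulp, Set.mem_setOf_eq, mem_closure_iff_seq_limit] at h
    obtain ⟨x, hx, hlim⟩ := h
    choose p hpS hpe using hx
    refine ⟨p, hpS, ?_, ?_⟩
    · have h2 : Tendsto (fun n => (x n).2) atTop (𝓝 ψ') :=
        (continuous_snd.tendsto _).comp hlim
      simpa [fun n => hpe n] using h2
    · have h1 : Tendsto (fun n => (x n).1) atTop (𝓝 (0 : F)) :=
        (continuous_fst.tendsto _).comp hlim
      have hQ : Tendsto (fun n => Q (p n).1) atTop (𝓝 (0 : F)) := by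
        have : (fun n => Q (p n).1) = fun n => (x n).1 := by
          funext n; rw [hpe n]
        rw [this]; exact h1
      have := Tendsto.inner (𝕜 := ℂ) hQ hQ
      simp only [inner_zero_left] at this
      have heq : ∀ n, ⟪(p n).2 - (c : ℂ) • (p n).1, (p n).1⟫_ℂ
          = ⟪Q (p n).1, Q (p n).1⟫_ℂ := fun n => hrep _ (hpS n) _ (hpS n)
      exact Tendsto.congr (fun n => (heq n).symm) this
  · rintro ⟨u, huS, hlim, hinner⟩
    have heq : ∀ n, ⟪(u n).2 - (c : ℂ) • (u n).1, (u n).1⟫_ℂ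
        = ⟪Q (u n).1, Q (u n).1⟫_ℂ := fun n => hrep _ (huS n) _ (huS n)
    have hsq : Tendsto (fun n => ‖Q (u n).1‖ ^ 2) atTop (𝓝 0) := by
      have h1 : Tendsto (fun n => ‖⟪(u n).2 - (c : ℂ) • (u n).1, (u n).1⟫_ℂ‖)
          atTop (𝓝 0) := by
        simpa using hinner.norm
      have h2 : (fun n => ‖⟪(u n).2 - (c : ℂ) • (u n).1, (u n).1⟫_ℂ‖)
          = fun n => ‖Q (u n).1‖ ^ 2 := by
        funext n
        rw [heq n, inner_self_eq_norm_sq_to_K, norm_pow, RCLike.norm_ofReal,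
          abs_of_nonneg (norm_nonneg _)]
      rwa [h2] at h1
    have hQ : Tendsto (fun n => Q (u n).1) atTop (𝓝 (0 : F)) := by
      rw [tendsto_zero_iff_norm_tendsto_zero]
      have : (fun n => ‖Q (u n).1‖) = fun n => Real.sqrt (‖Q (u n).1‖ ^ 2) := by
        funext n; rw [Real.sqrt_sq (norm_nonneg _)]
      rw [this]
      have := (Real.continuous_sqrt.tendsto 0).comp hsq
      simpa [Function.comp_def] using this
    rw [mulp, Set.mem_setOf_eq, mem_closure_iff_seq_limit]
    refine ⟨fun n => (Q (u n).1, (u n).2 - (c : ℂ) • (u n).1),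
      fun n => ⟨u n, huS n, rfl⟩, ?_⟩
    exact hQ.prodMk_nhds hlim
end
end

section
/- Let S be a semibounded linear relation in H with lower bound γ, and let S_f := S ⊞ ({0} × mul S*) (componentwise sum of the subspaces). Then S_f is a symmetric relation extending S, dom S_f = dom S, and any symmetric extension H of S with dom H ⊆ dom S satisfies H ⊆ S_f. Moreover S_f = {(φ,φ') ∈ S* : φ ∈ dom S}. -/
open scoped InnerProductSpace
open Filter Topology

noncomputable section

variable {E F F' : Type*}
  [NormedAddCommGroup E] [InnerProductSpace ℂ E] [CompleteSpace E]
  [NormedAddCommGroup F] [InnerProductSpace ℂ F] [CompleteSpace F]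
  [NormedAddCommGroup F'] [InnerProductSpace ℂ F'] [CompleteSpace F']

/-- The weak Friedrichs extension `S_f = S ⊞ ({0} × mul S*)` of a semibounded
relation `S`: it is a symmetric extension of `S` with `dom S_f = dom S`, it contains
every symmetric extension `T` of `S` with `dom T ⊆ dom S`, and
`S_f = {(φ,φ') ∈ S* : φ ∈ dom S}`. -/
theorem weak_Friedrichs_extension (S : Submodule ℂ (E × E)) (γ : ℝ)
    (hsym : ∀ p ∈ S, ∀ q ∈ S, ⟪p.2, q.1⟫_ℂ = ⟪p.1, q.2⟫_ℂ)
    (hsb : ∀ p ∈ S, γ * ‖p.1‖ ^ 2 ≤ (⟪p.2, p.1⟫_ℂ).re) :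
    (S : Set (E × E)) ⊆
        {r : E × E | ∃ p ∈ S, ∃ χ ∈ mulp (adj (S : Set (E × E))), r = (p.1, p.2 + χ)} ∧
      {r : E × E | ∃ p ∈ S, ∃ χ ∈ mulp (adj (S : Set (E × E))), r = (p.1, p.2 + χ)} ⊆
        adj {r : E × E | ∃ p ∈ S, ∃ χ ∈ mulp (adj (S : Set (E × E))), r = (p.1, p.2 + χ)} ∧
      dom {r : E × E | ∃ p ∈ S, ∃ χ ∈ mulp (adj (S : Set (E × E))), r = (p.1, p.2 + χ)}
        = dom (S : Set (E × E)) ∧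
      (∀ T : Submodule ℂ (E × E), (S : Set (E × E)) ⊆ (T : Set (E × E)) →
        (T : Set (E × E)) ⊆ adj (T : Set (E × E)) →
        dom (T : Set (E × E)) ⊆ dom (S : Set (E × E)) →
        (T : Set (E × E)) ⊆
          {r : E × E | ∃ p ∈ S, ∃ χ ∈ mulp (adj (S : Set (E × E))), r = (p.1, p.2 + χ)}) ∧
      {r : E × E | ∃ p ∈ S, ∃ χ ∈ mulp (adj (S : Set (E × E))), r = (p.1, p.2 + χ)}
        = {q ∈ adj (S : Set (E × E)) | q.1 ∈ dom (S : Set (E × E))} := by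

  -- χ ∈ mul S* means ⟪χ, f⟫ = 0 for every f ∈ dom S
  have hchi : ∀ χ ∈ mulp (adj (S : Set (E × E))), ∀ p ∈ S, ⟪χ, p.1⟫_ℂ = 0 := by
    intro χ hχ p hp
    have := hχ p hp
    simpa using this
  -- S itself is symmetric, i.e. S ⊆ adj S
  have hSadj : (S : Set (E × E)) ⊆ adj (S : Set (E × E)) := by
    intro p hp q hq
    exact hsym p hp q hq
  have hzero : (0 : E) ∈ mulp (adj (S : Set (E × E))) := by
    intro p hp
    simp
  refine ⟨?_, ?_, ?_, ?_, ?_⟩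
  · -- S ⊆ S_f
    intro p hp
    exact ⟨p, hp, 0, hzero, by simp⟩
  · -- S_f is symmetric
    rintro r ⟨p, hp, χ, hχ, rfl⟩ s ⟨q, hq, χ', hχ', rfl⟩
    simp only [inner_add_left, inner_add_right]
    rw [hchi χ hχ q hq, hsym p hp q hq]
    have h1 : ⟪χ', p.1⟫_ℂ = 0 := hchi χ' hχ' p hp
    have h2 : ⟪p.1, χ'⟫_ℂ = 0 := by
      rw [← inner_conj_symm, h1, map_zero]
    rw [h2]
  · -- dom S_f = dom S
    ext x
    constructor
    · rintro ⟨r, ⟨p, hp, χ, hχ, rfl⟩, rfl⟩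
      exact ⟨p, hp, rfl⟩
    · rintro ⟨p, hp, rfl⟩
      exact ⟨(p.1, p.2 + 0), ⟨p, hp, 0, hzero, rfl⟩, rfl⟩
  · -- maximality
    intro T hST hTsym hTdom r hr
    have hx : r.1 ∈ dom (S : Set (E × E)) := hTdom ⟨r, hr, rfl⟩
    obtain ⟨p, hp, hp1⟩ := hx
    refine ⟨p, hp, r.2 - p.2, ?_, ?_⟩
    · intro q hq
      have h1 : ⟪r.2, q.1⟫_ℂ = ⟪r.1, q.2⟫_ℂ := hTsym hr q (hST hq)
      have h2 : ⟪p.2, q.1⟫_ℂ = ⟪p.1, q.2⟫_ℂ := hsym p hp q hq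
      simp only [inner_sub_left, h1, h2, hp1]
      simp
    · simp [hp1]
  · -- S_f = {q ∈ S* : q.1 ∈ dom S}
    ext r
    constructor
    · rintro ⟨p, hp, χ, hχ, rfl⟩
      refine ⟨?_, ⟨p, hp, rfl⟩⟩
      intro q hq
      simp only [inner_add_left]
      rw [hchi χ hχ q hq, hsym p hp q hq]
      ring
    · rintro ⟨hradj, x, hx, hx1⟩
      refine ⟨x, hx, r.2 - x.2, ?_, ?_⟩
      · intro q hq
        have h1 : ⟪r.2, q.1⟫_ℂ = ⟪r.1, q.2⟫_ℂ := hradj q hq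
        have h2 : ⟪x.2, q.1⟫_ℂ = ⟪x.1, q.2⟫_ℂ := hsym x hx q hq
        simp only [inner_sub_left, h1, h2, hx1]
        simp
      · simp [hx1]
end
end

section
/- Let S be a semibounded linear relation in a Hilbert space H. Then the weak Friedrichs extension S_f = S ⊞ ({0} × mul S*) is selfadjoint if and only if dom S = (closure of dom S) ∩ dom S*. -/
open scoped InnerProductSpace
open Filter Topology

noncomputable section

variable {E F F' : Type*}
  [NormedAddCommGroup E] [InnerProductSpace ℂ E] [CompleteSpace E]
  [NormedAddCommGroup F] [InnerProductSpace ℂ F] [CompleteSpace F]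
  [NormedAddCommGroup F'] [InnerProductSpace ℂ F'] [CompleteSpace F']

/-- Auxiliary: a vector orthogonal to a set is orthogonal to every point of its closure. -/
private lemma inner_zero_of_mem_closure {D : Set E} {h χ : E}
    (hh : h ∈ closure D) (hχ : ∀ f ∈ D, ⟪χ, f⟫_ℂ = 0) : ⟪h, χ⟫_ℂ = 0 := by
  have h1 : closure D ⊆ {x : E | ⟪χ, x⟫_ℂ = 0} := by
    apply closure_minimal
    · intro f hf
      exact hχ f hf
    · exact isClosed_eq (Continuous.inner continuous_const continuous_id) continuous_const
  exact inner_eq_zero_symm.mp (h1 hh)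

/-- The weak Friedrichs extension `S_f = S ⊞ ({0} × mul S*)` of a semibounded
relation `S` is selfadjoint if and only if `dom S = (dom S)‾ ∩ dom S*`. -/
theorem weak_Friedrichs_selfadjoint_iff (S : Submodule ℂ (E × E)) (γ : ℝ)
    (hsym : ∀ p ∈ S, ∀ q ∈ S, ⟪p.2, q.1⟫_ℂ = ⟪p.1, q.2⟫_ℂ)
    (hsb : ∀ p ∈ S, γ * ‖p.1‖ ^ 2 ≤ (⟪p.2, p.1⟫_ℂ).re) :
    {r : E × E | ∃ p ∈ S, ∃ χ ∈ mulp (adj (S : Set (E × E))), r = (p.1, p.2 + χ)}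
        = adj {r : E × E | ∃ p ∈ S, ∃ χ ∈ mulp (adj (S : Set (E × E))), r = (p.1, p.2 + χ)} ↔
      dom (S : Set (E × E))
        = closure (dom (S : Set (E × E))) ∩ dom (adj (S : Set (E × E))) := by
  classical
  set T : Set (E × E) :=
    {r : E × E | ∃ p ∈ S, ∃ χ ∈ mulp (adj (S : Set (E × E))), r = (p.1, p.2 + χ)} with hTdef
  -- characterization of the multivalued part of the adjoint
  have hmul : ∀ χ : E, χ ∈ mulp (adj (S : Set (E × E))) ↔ ∀ p ∈ (S : Set (E × E)), ⟪χ, p.1⟫_ℂ = 0 := by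
    intro χ
    constructor
    · intro h p hp
      have := h p hp
      simpa using this
    · intro h p hp
      simpa using h p hp
  have hmul0 : (0 : E) ∈ mulp (adj (S : Set (E × E))) :=
    (hmul 0).mpr (fun p _ => inner_zero_left _)
  -- S ⊆ T
  have hST : (S : Set (E × E)) ⊆ T := by
    intro p hp
    exact ⟨p, hp, 0, hmul0, by simp⟩
  -- T ⊆ adj S
  have hTadj : T ⊆ adj (S : Set (E × E)) := by
    rintro r ⟨p, hp, χ, hχ, rfl⟩ q hq
    show ⟪p.2 + χ, q.1⟫_ℂ = ⟪p.1, q.2⟫_ℂ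
    rw [inner_add_left, hsym p hp q hq, (hmul χ).mp hχ q hq, add_zero]
  -- dom T = dom S
  have hdomT : dom T = dom (S : Set (E × E)) := by
    apply Set.Subset.antisymm
    · rintro x ⟨r, ⟨p, hp, χ, hχ, rfl⟩, rfl⟩
      exact ⟨p, hp, rfl⟩
    · rintro x ⟨p, hp, rfl⟩
      exact ⟨p, hST hp, rfl⟩
  -- the submodule whose coercion is dom S
  set D : Submodule ℂ E := S.map (LinearMap.fst ℂ E E) with hDdef
  have hD : dom (S : Set (E × E)) = (D : Set E) := by
    ext x
    simp [dom, hDdef, Submodule.mem_map]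
  have hDperp : ∀ χ : E, χ ∈ mulp (adj (S : Set (E × E))) ↔ χ ∈ Dᗮ := by
    intro χ
    rw [hmul, Submodule.mem_orthogonal]
    constructor
    · intro h u hu
      obtain ⟨p, hp, rfl⟩ := Submodule.mem_map.mp hu
      exact inner_eq_zero_symm.mp (h p hp)
    · intro h p hp
      exact inner_eq_zero_symm.mp (h p.1 (Submodule.mem_map.mpr ⟨p, hp, rfl⟩))
  -- characterization of adj T
  have hadjT : adj T =
      {r : E × E | r ∈ adj (S : Set (E × E)) ∧ r.1 ∈ closure (dom (S : Set (E × E)))} := by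
    ext r
    constructor
    · intro hr
      refine ⟨fun q hq => hr q (hST hq), ?_⟩
      rw [hD, ← D.topologicalClosure_coe, ← D.orthogonal_orthogonal_eq_closure]
      rw [SetLike.mem_coe, Submodule.mem_orthogonal]
      intro χ hχ
      have h0 : ((0 : E), χ) ∈ T := ⟨0, S.zero_mem, χ, (hDperp χ).mpr hχ, by simp⟩
      have := hr _ h0
      simp only [inner_zero_right] at this
      exact inner_eq_zero_symm.mp this.symm
    · rintro ⟨hadj, hcl⟩
      rintro q ⟨p, hp, χ, hχ, rfl⟩
      show ⟪r.2, p.1⟫_ℂ = ⟪r.1, p.2 + χ⟫_ℂ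
      have hχ0 : ⟪r.1, χ⟫_ℂ = 0 := by
        apply inner_zero_of_mem_closure hcl
        rintro f ⟨p', hp', rfl⟩
        exact (hmul χ).mp hχ p' hp'
      rw [inner_add_right, hadj p hp, hχ0, add_zero]
  -- domain of adj T
  have hdomadjT : dom (adj T)
      = closure (dom (S : Set (E × E))) ∩ dom (adj (S : Set (E × E))) := by
    rw [hadjT]
    ext x
    constructor
    · rintro ⟨r, ⟨hr1, hr2⟩, rfl⟩
      exact ⟨hr2, ⟨r, hr1, rfl⟩⟩
    · rintro ⟨hx1, ⟨r, hr, rfl⟩⟩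
      exact ⟨r, ⟨hr, hx1⟩, rfl⟩
  constructor
  · intro hEq
    rw [← hdomadjT, ← hEq, hdomT]
  · intro hdom
    rw [hadjT]
    ext r
    constructor
    · intro hr
      refine ⟨hTadj hr, ?_⟩
      apply subset_closure
      rw [← hdomT]
      exact ⟨r, hr, rfl⟩
    · rintro ⟨hradj, hrcl⟩
      have hr1 : r.1 ∈ dom (S : Set (E × E)) := by
        rw [hdom]
        exact ⟨hrcl, ⟨r, hradj, rfl⟩⟩
      obtain ⟨p, hp, hp1⟩ := hr1
      have hpS : ((r.1, p.2) : E × E) ∈ S := by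
        have : ((r.1, p.2) : E × E) = p := Prod.ext hp1.symm rfl
        rw [this]; exact hp
      refine ⟨(r.1, p.2), hpS, r.2 - p.2, ?_, by simp⟩
      rw [hmul]
      intro q hq
      have h1 : ⟪r.2, q.1⟫_ℂ = ⟪r.1, q.2⟫_ℂ := hradj q hq
      have h2 : ⟪p.2, q.1⟫_ℂ = ⟪r.1, q.2⟫_ℂ := by
        rw [← hp1]; exact hsym p hp q hq
      rw [inner_sub_left, h1, h2, sub_self]
end
end

section
/- Let Q be a singular linear operator from dom Q ⊆ H to K, and assume dom Q* = ker Q*. Then the composition relation Q*Q equals ker Q × mul Q*, i.e., Q*Q = {(f, f') : f ∈ ker Q, f' ∈ mul Q*}. -/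
open scoped InnerProductSpace
open Filter Topology

noncomputable section

variable {E F F' : Type*}
  [NormedAddCommGroup E] [InnerProductSpace ℂ E] [CompleteSpace E]
  [NormedAddCommGroup F] [InnerProductSpace ℂ F] [CompleteSpace F]
  [NormedAddCommGroup F'] [InnerProductSpace ℂ F'] [CompleteSpace F']

/-- If `Q` is a singular operator with domain `D`, i.e. `dom Q* = ker Q*`, then the
composition relation `Q*Q` equals `ker Q × mul Q*`. -/
theorem singular_adj_comp (D : Submodule ℂ E) (Q : E →ₗ[ℂ] F)
    (hsing : dom (adj (graphOn Q (D : Set E))) = kerr (adj (graphOn Q (D : Set E)))) :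
    {p : E × E | p.1 ∈ D ∧ (Q p.1, p.2) ∈ adj (graphOn Q (D : Set E))} =
      {p : E × E | (p.1 ∈ D ∧ Q p.1 = 0) ∧ p.2 ∈ mulp (adj (graphOn Q (D : Set E)))} := by
  ext ⟨f, f'⟩
  simp only [Set.mem_setOf_eq]
  constructor
  · rintro ⟨hf, hadj⟩
    have hker : (Q f, (0 : E)) ∈ adj (graphOn Q (D : Set E)) := by
      have : Q f ∈ dom (adj (graphOn Q (D : Set E))) := ⟨(Q f, f'), hadj, rfl⟩
      rw [hsing] at this; exact this
    have h0 : Q f = 0 := by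
      have := hker (f, Q f) ⟨hf, rfl⟩
      simp only [inner_zero_left] at this
      exact inner_self_eq_zero.mp this.symm
    refine ⟨⟨hf, h0⟩, ?_⟩
    have : ((0 : F), f') ∈ adj (graphOn Q (D : Set E)) := by rwa [h0] at hadj
    exact this
  · rintro ⟨⟨hf, h0⟩, hmul⟩
    refine ⟨hf, ?_⟩
    rw [h0]; exact hmul
end
end

section
/- Let S be a semibounded linear relation in H with lower bound γ, c ≤ γ, representing map Q_c for t(S) - c, companion relation J_c, and suppose H is a selfadjoint extension of S with lower bound ≥ c such that the closed form of H restricts the closed form of the Kreĭn type extension (i.e., for all (f,f') ∈ H: f ∈ dom J_c* and ⟨f'-cf, f⟩ = ‖(J_c*)_reg f‖²). Then for every (f,f') ∈ H and (h,h') ∈ S: ⟨f'-h'-c(f-h), f-h⟩ = ‖(J_c*)_reg f - Q_c h‖². -/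
open scoped InnerProductSpace
open Filter Topology

noncomputable section

variable {E F F' : Type*}
  [NormedAddCommGroup E] [InnerProductSpace ℂ E] [CompleteSpace E]
  [NormedAddCommGroup F] [InnerProductSpace ℂ F] [CompleteSpace F]
  [NormedAddCommGroup F'] [InnerProductSpace ℂ F'] [CompleteSpace F']

/-- Key identity for selfadjoint extensions whose closed form restricts that of the
Kreĭn type extension: for `(f,f') ∈ H` and `(h,h') ∈ S`,
`⟪f'-h'-c(f-h), f-h⟫ = ‖(J_c*)_reg f - Q_c h‖²`. -/
theorem krein_form_identity (S : Submodule ℂ (E × E)) (γ c : ℝ) (hc : c ≤ γ)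
    (hsym : ∀ p ∈ S, ∀ q ∈ S, ⟪p.2, q.1⟫_ℂ = ⟪p.1, q.2⟫_ℂ)
    (hsb : ∀ p ∈ S, γ * ‖p.1‖ ^ 2 ≤ (⟪p.2, p.1⟫_ℂ).re)
    (Q : E →ₗ[ℂ] F)
    (hrep : ∀ p ∈ S, ∀ q ∈ S,
      ⟪p.2 - (c : ℂ) • p.1, q.1⟫_ℂ = ⟪Q p.1, Q q.1⟫_ℂ)
    -- `G` is the orthogonal operator part `(J_c*)_reg` of the adjoint of the
    -- companion relation `J_c`:
    (G : E → F)
    (hG : ∀ f ∈ dom (adj (companion S c Q)), (f, G f) ∈ adj (companion S c Q) ∧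
      ∀ m ∈ mulp (adj (companion S c Q)), ⟪G f, m⟫_ℂ = 0)
    -- `T` is a selfadjoint extension of `S`, bounded below by `c`, whose closed form
    -- restricts the closed form of the Kreĭn type extension:
    (T : Submodule ℂ (E × E)) (hST : (S : Set (E × E)) ⊆ (T : Set (E × E)))
    (hTsa : (T : Set (E × E)) = adj (T : Set (E × E)))
    (hTbd : ∀ p ∈ T, 0 ≤ (⟪p.2 - (c : ℂ) • p.1, p.1⟫_ℂ).re)
    (hform : ∀ p ∈ T, p.1 ∈ dom (adj (companion S c Q)) ∧
      ⟪p.2 - (c : ℂ) • p.1, p.1⟫_ℂ = ((‖G p.1‖ ^ 2 : ℝ) : ℂ)) :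
    ∀ p ∈ T, ∀ q ∈ S,
      ⟪p.2 - q.2 - (c : ℂ) • (p.1 - q.1), p.1 - q.1⟫_ℂ =
        ((‖G p.1 - Q q.1‖ ^ 2 : ℝ) : ℂ) := by
  intro p hp q hq
  obtain ⟨hdom, h1⟩ := hform p hp
  obtain ⟨hadj, -⟩ := hG p.1 hdom
  have h3 : ⟪G p.1, Q q.1⟫_ℂ = ⟪p.1, q.2 - (c : ℂ) • q.1⟫_ℂ :=
    hadj (Q q.1, q.2 - (c : ℂ) • q.1) ⟨q, hq, rfl⟩
  have h4 : ⟪p.2, q.1⟫_ℂ = ⟪p.1, q.2⟫_ℂ := by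
    have hp' : (p : E × E) ∈ (T : Set (E × E)) := hp
    rw [hTsa] at hp'
    exact hp' q (hST hq)
  have h2 := hrep q hq q hq
  have h1' : ⟪p.2 - (c : ℂ) • p.1, p.1⟫_ℂ = ⟪G p.1, G p.1⟫_ℂ := by
    rw [h1, Complex.ofReal_pow]
    exact (inner_self_eq_norm_sq_to_K (𝕜 := ℂ) (G p.1)).symm
  have h3' : ⟪q.2 - (c : ℂ) • q.1, p.1⟫_ℂ = ⟪Q q.1, G p.1⟫_ℂ := by
    rw [← inner_conj_symm, ← h3, inner_conj_symm]
  rw [show ((‖G p.1 - Q q.1‖ ^ 2 : ℝ) : ℂ) = ⟪G p.1 - Q q.1, G p.1 - Q q.1⟫_ℂ by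
    rw [Complex.ofReal_pow]
    exact (inner_self_eq_norm_sq_to_K (𝕜 := ℂ) (G p.1 - Q q.1)).symm]
  simp only [inner_sub_left, inner_sub_right, inner_smul_left, inner_smul_right,
    Complex.conj_ofReal] at *
  linear_combination h1' + h2 + h3 - h3' - h4
end
end

section
/- Let S be a linear relation in H with dom S ⊥ ran S (i.e., W(S) = {0}). Then the relation S_F := (closure of dom S) × mul S* and the relation S_K := ker S* × (closure of ran S) are both selfadjoint relations extending S, and S_F ∩ S_K = (closure of dom S ∩ ker S*) × (closure of ran S ∩ mul S*) ⊇ S̄. -/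
open scoped InnerProductSpace
open Filter Topology

noncomputable section

variable {E F F' : Type*}
  [NormedAddCommGroup E] [InnerProductSpace ℂ E] [CompleteSpace E]
  [NormedAddCommGroup F] [InnerProductSpace ℂ F] [CompleteSpace F]
  [NormedAddCommGroup F'] [InnerProductSpace ℂ F'] [CompleteSpace F']

lemma adj_closed_prod (A : Submodule ℂ E) (hA : IsClosed (A : Set E)) :
    adj ((A : Set E) ×ˢ (Aᗮ : Set E)) = (A : Set E) ×ˢ (Aᗮ : Set E) := by
  haveI : CompleteSpace A := hA.completeSpace_coe
  ext ⟨h, k⟩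
  simp only [adj, Set.mem_setOf_eq, Set.mem_prod]
  constructor
  · intro hq
    constructor
    · simp only [SetLike.mem_coe]
      rw [← Submodule.orthogonal_orthogonal A, Submodule.mem_orthogonal]
      intro y hy
      have := hq (0, y) ⟨A.zero_mem, hy⟩
      simp only [inner_zero_right] at this
      rw [inner_eq_zero_symm]
      exact this.symm
    · simp only [SetLike.mem_coe]
      rw [Submodule.mem_orthogonal]
      intro x hx
      have := hq (x, 0) ⟨hx, Aᗮ.zero_mem⟩
      simp only [inner_zero_right] at this
      rw [inner_eq_zero_symm]
      exact this
  · rintro ⟨hh, hk⟩ p ⟨hp1, hp2⟩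
    have h1 : ⟪k, p.1⟫_ℂ = 0 := (Submodule.mem_orthogonal' A k).mp hk p.1 hp1
    have h2 : ⟪h, p.2⟫_ℂ = 0 := hp2 h hh
    rw [h1, h2]

lemma adj_closed_prod' (A : Submodule ℂ E) (hA : IsClosed (A : Set E)) :
    adj ((Aᗮ : Set E) ×ˢ (A : Set E)) = (Aᗮ : Set E) ×ˢ (A : Set E) := by
  haveI : CompleteSpace A := hA.completeSpace_coe
  ext ⟨h, k⟩
  simp only [adj, Set.mem_setOf_eq, Set.mem_prod]
  constructor
  · intro hq
    constructor
    · simp only [SetLike.mem_coe]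
      rw [Submodule.mem_orthogonal]
      intro x hx
      have := hq (0, x) ⟨Aᗮ.zero_mem, hx⟩
      simp only [inner_zero_right] at this
      rw [inner_eq_zero_symm]
      exact this.symm
    · simp only [SetLike.mem_coe]
      rw [← Submodule.orthogonal_orthogonal A, Submodule.mem_orthogonal]
      intro y hy
      have := hq (y, 0) ⟨hy, A.zero_mem⟩
      simp only [inner_zero_right] at this
      rw [inner_eq_zero_symm]
      exact this
  · rintro ⟨hh, hk⟩ p ⟨hp1, hp2⟩
    have h1 : ⟪k, p.1⟫_ℂ = 0 := hp1 k hk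
    have h2 : ⟪h, p.2⟫_ℂ = 0 := (Submodule.mem_orthogonal' A h).mp hh p.2 hp2
    rw [h1, h2]

/-- For a linear relation `S` with `dom S ⊥ ran S`, the relations
`S_F = (dom S)‾ × mul S*` and `S_K = ker S* × (ran S)‾` are selfadjoint extensions of
`S`, their intersection is `((dom S)‾ ∩ ker S*) × ((ran S)‾ ∩ mul S*)`, and it
contains the closure of `S`. -/
theorem orthogonal_dom_ran_extensions (S : Submodule ℂ (E × E))
    (horth : ∀ p ∈ S, ∀ x ∈ dom (S : Set (E × E)), ⟪p.2, x⟫_ℂ = 0) :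
    adj (closure (dom (S : Set (E × E))) ×ˢ mulp (adj (S : Set (E × E))))
        = closure (dom (S : Set (E × E))) ×ˢ mulp (adj (S : Set (E × E))) ∧
      adj (kerr (adj (S : Set (E × E))) ×ˢ closure (ran (S : Set (E × E))))
        = kerr (adj (S : Set (E × E))) ×ˢ closure (ran (S : Set (E × E))) ∧
      (S : Set (E × E)) ⊆
        closure (dom (S : Set (E × E))) ×ˢ mulp (adj (S : Set (E × E))) ∧
      (S : Set (E × E)) ⊆
        kerr (adj (S : Set (E × E))) ×ˢ closure (ran (S : Set (E × E))) ∧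
      (closure (dom (S : Set (E × E))) ×ˢ mulp (adj (S : Set (E × E)))) ∩
          (kerr (adj (S : Set (E × E))) ×ˢ closure (ran (S : Set (E × E))))
        = (closure (dom (S : Set (E × E))) ∩ kerr (adj (S : Set (E × E)))) ×ˢ
            (closure (ran (S : Set (E × E))) ∩ mulp (adj (S : Set (E × E)))) ∧
      closure (S : Set (E × E)) ⊆
        (closure (dom (S : Set (E × E))) ×ˢ mulp (adj (S : Set (E × E)))) ∩
          (kerr (adj (S : Set (E × E))) ×ˢ closure (ran (S : Set (E × E)))) := by
  set Dsub := S.map (LinearMap.fst ℂ E E) with hDsub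
  set Rsub := S.map (LinearMap.snd ℂ E E) with hRsub
  have hD : dom (S : Set (E × E)) = (Dsub : Set E) := by
    rw [hDsub, Submodule.map_coe]; rfl
  have hR : ran (S : Set (E × E)) = (Rsub : Set E) := by
    rw [hRsub, Submodule.map_coe]; rfl
  have hM : mulp (adj (S : Set (E × E))) = (Dsubᗮ : Set E) := by
    ext y
    simp only [mulp, adj, Set.mem_setOf_eq, SetLike.mem_coe, Submodule.mem_orthogonal]
    constructor
    · rintro hy u ⟨p, hp, rfl⟩
      have := hy p hp
      simp only [inner_zero_left] at this
      rw [inner_eq_zero_symm]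
      exact this
    · intro hy p hp
      have : ⟪(p : E × E).1, y⟫_ℂ = 0 := hy p.1 ⟨p, hp, rfl⟩
      rw [inner_zero_left, inner_eq_zero_symm]
      exact this
  have hK : kerr (adj (S : Set (E × E))) = (Rsubᗮ : Set E) := by
    ext x
    simp only [kerr, adj, Set.mem_setOf_eq, SetLike.mem_coe, Submodule.mem_orthogonal]
    constructor
    · rintro hx u ⟨p, hp, rfl⟩
      have := hx p hp
      simp only [inner_zero_left] at this
      rw [inner_eq_zero_symm]
      exact this.symm
    · intro hx p hp
      have : ⟪(p : E × E).2, x⟫_ℂ = 0 := hx p.2 ⟨p, hp, rfl⟩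
      rw [inner_zero_left, inner_eq_zero_symm] at *
      exact this.symm
  have hclD : closure (dom (S : Set (E × E))) = (Dsub.topologicalClosure : Set E) := by
    rw [hD]; rfl
  have hclR : closure (ran (S : Set (E × E))) = (Rsub.topologicalClosure : Set E) := by
    rw [hR]; rfl
  have horthD : (Dsub.topologicalClosure)ᗮ = Dsubᗮ := by
    rw [← Submodule.orthogonal_orthogonal_eq_closure, Submodule.triorthogonal_eq_orthogonal]
  have horthR : (Rsub.topologicalClosure)ᗮ = Rsubᗮ := by
    rw [← Submodule.orthogonal_orthogonal_eq_closure, Submodule.triorthogonal_eq_orthogonal]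
  have hSF : (S : Set (E × E)) ⊆
      closure (dom (S : Set (E × E))) ×ˢ mulp (adj (S : Set (E × E))) := by
    intro p hp
    refine ⟨subset_closure ⟨p, hp, rfl⟩, ?_⟩
    intro q hq
    rw [inner_zero_left]
    exact horth p hp q.1 ⟨q, hq, rfl⟩
  have hSK : (S : Set (E × E)) ⊆
      kerr (adj (S : Set (E × E))) ×ˢ closure (ran (S : Set (E × E))) := by
    intro p hp
    refine ⟨?_, subset_closure ⟨p, hp, rfl⟩⟩
    intro q hq
    rw [inner_zero_left]
    have := horth q hq p.1 ⟨p, hp, rfl⟩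
    rw [inner_eq_zero_symm] at this
    exact this.symm
  refine ⟨?_, ?_, hSF, hSK, ?_, ?_⟩
  · rw [hclD, hM, ← horthD]
    exact adj_closed_prod _ Dsub.isClosed_topologicalClosure
  · rw [hclR, hK, ← horthR]
    exact adj_closed_prod' _ Rsub.isClosed_topologicalClosure
  · rw [Set.prod_inter_prod, Set.inter_comm (mulp (adj (S : Set (E × E))))]
  · exact closure_minimal (fun p hp => ⟨hSF hp, hSK hp⟩)
      ((isClosed_closure.prod (hM ▸ Dsub.isClosed_orthogonal)).inter
        ((hK ▸ Rsub.isClosed_orthogonal).prod isClosed_closure))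
end
end
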